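/- If f(z) = Σ aₙzⁿ is subordinate to h(z) = Σ bₙzⁿ in the unit disk, then for every k ≥ 0 and all |z| ≤ 1/2, |Σ_{n=0}^k aₙ zⁿ| ≤ Σ_{n=0}^k |bₙ| |z|ⁿ. -/

import Mathlib

/-!
Rogosinski's lemma: if `|G| ≤ M` on the unit disk then every section `s_N(G)` of its Taylor
series is bounded by `M` on `|z| ≤ 1/2`. Indeed, `s_N(G)(r z)` is the mean of `G(r e^{it})`
against the kernel `2 Re Σ_{j ≤ N} (z e^{-it})^j - 1`, which is nonnegative with mean `1` when
`|z| ≤ 1/2`; let `r → 1`.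

For `f = h ∘ φ` with `φ(0) = 0`, expanding `h` and integrating term by term gives
`s_k(f) = Σ_{n ≤ k} bₙ s_k(φⁿ)`. By Schwarz, `φ = z ψ` with `|ψ| ≤ 1`, so
`s_k(φⁿ)(z) = zⁿ s_{k-n}(ψⁿ)(z)`, which Rogosinski's lemma bounds by `|z|ⁿ`.
-/

open Complex MeasureTheory Finset Metric Set Filter
open scoped Real Topology ComplexConjugate

theorem summable_norm_mul_pow_of_hasSum_ball {e : ℕ → ℂ} {G : ℂ → ℂ}
    (hG : ∀ w : ℂ, ‖w‖ < 1 → HasSum (fun m => e m * w ^ m) (G w)) {r : ℝ} (hr0 : 0 ≤ r)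
    (hr1 : r < 1) : Summable fun m => ‖e m‖ * r ^ m := by
  obtain ⟨ρ, hrρ, hρ1⟩ := exists_between hr1
  have hρ0 : 0 < ρ := hr0.trans_lt hrρ
  have hbdd : (fun m => ‖e m‖ * ρ ^ m) =O[atTop] fun _ => (1 : ℝ) := by
    have h := (hG ρ (by rwa [norm_real, Real.norm_of_nonneg hρ0.le])).summable
    simpa [norm_mul, norm_pow, norm_real, Real.norm_of_nonneg hρ0.le] using
      h.norm.tendsto_atTop_zero.isBoundedUnder_le.isBigO_one ℝ
  refine summable_of_isBigO_nat (summable_geometric_of_lt_one (by positivity)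
    ((div_lt_one hρ0).mpr hrρ)) ?_
  refine (hbdd.mul (Asymptotics.isBigO_refl (fun m => (r / ρ) ^ m) atTop)).congr
    (fun m => ?_) (fun m => one_mul _)
  rw [div_pow, mul_assoc, mul_div_cancel₀ _ (pow_ne_zero m hρ0.ne')]

theorem intervalIntegral.hasSum_integral_of_norm_le_mul {ι E : Type*} [Countable ι]
    [NormedAddCommGroup E] [NormedSpace ℝ E] [CompleteSpace E] {F : ι → ℝ → E} {f : ℝ → E}
    {c : ι → ℝ} {g : ℝ → ℝ} {a b : ℝ} (hF : ∀ i, Continuous (F i)) (hg : Continuous g)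
    (hc : Summable c) (hFg : ∀ i t, ‖F i t‖ ≤ c i * g t)
    (hf : ∀ t, HasSum (fun i => F i t) (f t)) :
    HasSum (fun i => ∫ t in a..b, F i t) (∫ t in a..b, f t) := by
  refine intervalIntegral.hasSum_integral_of_dominated_convergence (fun i t => c i * g t)
    (fun i => (hF i).aestronglyMeasurable) (fun i => ae_of_all _ fun t _ => hFg i t)
    (ae_of_all _ fun t _ => hc.mul_right (g t)) ?_ (ae_of_all _ fun t _ => hf t)
  simp_rw [tsum_mul_right]
  exact (hg.const_mul _).intervalIntegrable _ _

theorem integral_exp_int_mul_I (n : ℤ) :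
    ∫ t in (0 : ℝ)..2 * π, exp (n * t * I) = if n = 0 then (2 * π : ℂ) else 0 := by
  split_ifs with hn
  · simp [hn]
  · have hnI : (n : ℂ) * I ≠ 0 := by simpa using hn
    simp_rw [mul_right_comm _ _ I]
    rw [integral_exp_mul_complex hnI]
    have h : (n : ℂ) * I * (2 * π) = n * (2 * π * I) := by ring
    simp [h, exp_int_mul_two_pi_mul_I]

theorem one_half_le_re_geom_sum {ζ : ℂ} (hζ : ‖ζ‖ ≤ 1 / 2) (N : ℕ) :
    1 / 2 ≤ (∑ j ∈ range (N + 1), ζ ^ j).re := by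
  rcases N.eq_zero_or_pos with rfl | hN
  · norm_num
  set S := ∑ j ∈ range (N + 1), ζ ^ j
  have hζ1 : 1 - ζ ≠ 0 := by
    rw [sub_ne_zero]
    rintro rfl
    norm_num at hζ
  -- Multiply `(2S - 1)(1 - ζ) = 1 + ζ - 2ζ^(N+1)` by `conj (1 - ζ)` to make the factor real.
  have hkey : (2 * S.re - 1) * normSq (1 - ζ) =
      1 - ‖ζ‖ ^ 2 - 2 * (ζ ^ (N + 1) * conj (1 - ζ)).re := by
    have h : (2 * S - 1) * ((1 - ζ) * conj (1 - ζ)) =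
        (1 + ζ) * conj (1 - ζ) - 2 * (ζ ^ (N + 1) * conj (1 - ζ)) := by
      linear_combination (2 * conj (1 - ζ)) * geom_sum_mul_neg ζ (N + 1)
    rw [mul_conj] at h
    have := congrArg re h
    simp only [mul_re, sub_re, add_re, ofReal_re, ofReal_im, conj_re, conj_im, one_re, one_im,
      re_ofNat, im_ofNat, sub_im, mul_im, add_im] at this ⊢
    rw [Complex.sq_norm, normSq_apply ζ]
    linarith
  have hpow : ‖ζ ^ (N + 1) * conj (1 - ζ)‖ ≤ 1 / 4 * (3 / 2) := by
    rw [norm_mul, norm_pow, RCLike.norm_conj]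
    gcongr
    · calc ‖ζ‖ ^ (N + 1) ≤ (1 / 2) ^ (N + 1) := by gcongr
        _ ≤ (1 / 2) ^ 2 := pow_le_pow_of_le_one (by norm_num) (by norm_num) (by omega)
        _ = 1 / 4 := by norm_num
    · linarith [norm_sub_le (1 : ℂ) ζ, norm_one (α := ℂ)]
  have hre := (re_le_norm _).trans hpow
  have hsq : ‖ζ‖ ^ 2 ≤ 1 / 4 := by nlinarith [norm_nonneg ζ]
  have hpos : 0 < normSq (1 - ζ) := normSq_pos.mpr hζ1
  nlinarith

noncomputable def rogosinskiKernel (z : ℂ) (N : ℕ) (t : ℝ) : ℝ :=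
  2 * (∑ j ∈ range (N + 1), (z * exp (-(t * I))) ^ j).re - 1

theorem rogosinskiKernel_nonneg {z : ℂ} (hz : ‖z‖ ≤ 1 / 2) (N : ℕ) (t : ℝ) :
    0 ≤ rogosinskiKernel z N t := by
  have h : ‖z * exp (-(t * I))‖ ≤ 1 / 2 := by
    rwa [norm_mul, show -(t * I) = (-t : ℝ) * I by push_cast; ring, norm_exp_ofReal_mul_I,
      mul_one]
  rw [rogosinskiKernel]
  linarith [one_half_le_re_geom_sum h N]

theorem continuous_rogosinskiKernel (z : ℂ) (N : ℕ) : Continuous (rogosinskiKernel z N) := by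
  unfold rogosinskiKernel
  fun_prop

theorem ofReal_rogosinskiKernel (z : ℂ) (N : ℕ) (t : ℝ) :
    (rogosinskiKernel z N t : ℂ) =
      ∑ j ∈ range (N + 1), (z ^ j * exp (-(j * t * I)) + conj z ^ j * exp (j * t * I)) - 1 := by
  have hpow (j : ℕ) : (z * exp (-(t * I))) ^ j = z ^ j * exp (-(j * t * I)) := by
    rw [mul_pow, ← exp_nat_mul]; ring_nf
  have hconj (j : ℕ) : conj (z ^ j * exp (-(j * t * I))) = conj z ^ j * exp (j * t * I) := by
    rw [map_mul, map_pow, ← exp_conj]; simp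
  rw [rogosinskiKernel, ofReal_sub, ofReal_mul, re_eq_add_conj, map_sum, sum_add_distrib]
  simp only [hpow, hconj]
  push_cast
  ring

theorem integral_exp_mul_rogosinskiKernel (z : ℂ) (N m : ℕ) :
    ∫ t in (0 : ℝ)..2 * π, exp (m * t * I) * rogosinskiKernel z N t =
      2 * π * if m ≤ N then z ^ m else 0 := by
  have hint (c : ℂ) (n : ℤ) :
      IntervalIntegrable (fun t : ℝ => c * exp (n * t * I)) volume 0 (2 * π) :=
    (by fun_prop : Continuous fun t : ℝ => c * exp (n * t * I)).intervalIntegrable _ _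
  have hexpand (t : ℝ) : exp (m * t * I) * rogosinskiKernel z N t =
      ∑ j ∈ range (N + 1), (z ^ j * exp (((m - j : ℤ) : ℂ) * t * I) +
        conj z ^ j * exp (((m + j : ℤ) : ℂ) * t * I)) - 1 * exp (((m : ℤ) : ℂ) * t * I) := by
    rw [ofReal_rogosinskiKernel, mul_sub, mul_sum, mul_one, one_mul]
    congr 1
    refine sum_congr rfl fun j _ => ?_
    push_cast
    simp only [sub_mul, add_mul, exp_sub, exp_add, exp_neg]
    ring
  have hsub (j : ℕ) : (m : ℤ) - j = 0 ↔ j = m := by omega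
  have hadd (j : ℕ) : (m : ℤ) + j = 0 ↔ m = 0 ∧ j = 0 := by omega
  simp_rw [hexpand]
  rw [intervalIntegral.integral_sub
      ((continuous_finsetSum _ fun j _ => by fun_prop).intervalIntegrable _ _) (hint _ _),
    intervalIntegral.integral_finsetSum fun j _ => (hint _ _).add (hint _ _)]
  simp only [intervalIntegral.integral_add (hint _ _) (hint _ _),
    intervalIntegral.integral_const_mul, integral_exp_int_mul_I, hsub, hadd, mul_ite, mul_zero,
    sum_add_distrib, sum_ite_eq', Finset.mem_range]
  rcases m.eq_zero_or_pos with rfl | hm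
  · simp
  · simp [hm.ne', mul_comm]

theorem integral_rogosinskiKernel (z : ℂ) (N : ℕ) :
    ∫ t in (0 : ℝ)..2 * π, rogosinskiKernel z N t = 2 * π := by
  have h := integral_exp_mul_rogosinskiKernel z N 0
  simp only [CharP.cast_eq_zero, zero_mul, exp_zero, one_mul, zero_le, if_true, pow_zero,
    mul_one, intervalIntegral.integral_ofReal] at h
  exact_mod_cast h

theorem integral_mul_rogosinskiKernel_of_hasSum {e : ℕ → ℂ} {G : ℂ → ℂ}
    (hG : ∀ w : ℂ, ‖w‖ < 1 → HasSum (fun m => e m * w ^ m) (G w)) {r : ℝ} (hr0 : 0 ≤ r)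
    (hr1 : r < 1) (z : ℂ) (N : ℕ) :
    ∫ t in (0 : ℝ)..2 * π, G (circleMap 0 r t) * rogosinskiKernel z N t =
      2 * π * ∑ m ∈ range (N + 1), e m * (r * z) ^ m := by
  have hK := continuous_rogosinskiKernel z N
  have hnorm (t : ℝ) : ‖circleMap 0 r t‖ = r := by simp [abs_of_nonneg hr0]
  have hswap := intervalIntegral.hasSum_integral_of_norm_le_mul (a := 0) (b := 2 * π)
    (F := fun m t => e m * circleMap 0 r t ^ m * rogosinskiKernel z N t)
    (fun m => by fun_prop) (continuous_abs.comp hK)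
    (summable_norm_mul_pow_of_hasSum_ball hG hr0 hr1) (fun m t => by simp [hnorm])
    (fun t => (hG _ ((hnorm t).trans_lt hr1)).mul_right _)
  refine hswap.unique ?_
  have hterm (m : ℕ) :
      ∫ t in (0 : ℝ)..2 * π, e m * circleMap 0 r t ^ m * rogosinskiKernel z N t =
      2 * π * if m ≤ N then e m * (r * z) ^ m else 0 := by
    simp_rw [circleMap_zero_pow, circleMap_zero, mul_assoc, intervalIntegral.integral_const_mul,
      ofReal_mul, ofReal_natCast, integral_exp_mul_rogosinskiKernel]
    split_ifs <;> push_cast <;> ring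
  have hsum : 2 * π * ∑ m ∈ range (N + 1), e m * (r * z) ^ m =
      ∑ m ∈ range (N + 1), 2 * π * if m ≤ N then e m * (r * z) ^ m else 0 := by
    rw [mul_sum]
    exact sum_congr rfl fun m hm => by simp [mem_range_succ_iff.mp hm]
  simp_rw [hterm, hsum]
  exact hasSum_sum_of_ne_finset_zero fun m hm => by simp_all

theorem norm_sum_range_mul_pow_le_of_norm_le {e : ℕ → ℂ} {G : ℂ → ℂ} {M : ℝ}
    (hG : ∀ w : ℂ, ‖w‖ < 1 → HasSum (fun m => e m * w ^ m) (G w))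
    (hGM : ∀ w : ℂ, ‖w‖ < 1 → ‖G w‖ ≤ M) {z : ℂ} (hz : ‖z‖ ≤ 1 / 2) (N : ℕ) :
    ‖∑ m ∈ range (N + 1), e m * z ^ m‖ ≤ M := by
  have hdilate {r : ℝ} (hr0 : 0 ≤ r) (hr1 : r < 1) :
      ‖∑ m ∈ range (N + 1), e m * (r * z) ^ m‖ ≤ M := by
    have hK := rogosinskiKernel_nonneg hz N
    have hbound : ‖∫ t in (0 : ℝ)..2 * π, G (circleMap 0 r t) * rogosinskiKernel z N t‖ ≤
        ∫ t in (0 : ℝ)..2 * π, M * rogosinskiKernel z N t := by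
      refine intervalIntegral.norm_integral_le_of_norm_le Real.two_pi_pos.le
        (ae_of_all _ fun t _ => ?_)
        ((continuous_const.mul (continuous_rogosinskiKernel z N)).intervalIntegrable _ _)
      rw [norm_mul, norm_real, Real.norm_of_nonneg (hK t)]
      exact mul_le_mul_of_nonneg_right (hGM _ (by simpa [abs_of_nonneg hr0])) (hK t)
    have h2π : ‖(2 * π : ℂ)‖ = 2 * π := by simp [Real.pi_pos.le]
    rw [integral_mul_rogosinskiKernel_of_hasSum hG hr0 hr1, intervalIntegral.integral_const_mul,
      integral_rogosinskiKernel, norm_mul, h2π, mul_comm M] at hbound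
    exact le_of_mul_le_mul_left hbound Real.two_pi_pos
  have hcont : Continuous fun r : ℝ => ∑ m ∈ range (N + 1), e m * (r * z) ^ m := by fun_prop
  have hlim : Tendsto (fun r : ℝ => ∑ m ∈ range (N + 1), e m * (r * z) ^ m) (𝓝[<] 1)
      (𝓝 (∑ m ∈ range (N + 1), e m * z ^ m)) := by
    simpa using (hcont.tendsto 1).mono_left nhdsWithin_le_nhds
  refine le_of_tendsto hlim.norm ?_
  filter_upwards [Ioo_mem_nhdsLT zero_lt_one] with r hr
  exact hdilate hr.1.le hr.2

theorem hasSum_sum_range_of_comp {h φ : ℂ → ℂ} {a b : ℕ → ℂ} {c : ℕ → ℕ → ℂ}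
    (ha : ∀ w : ℂ, ‖w‖ < 1 → HasSum (fun m => a m * w ^ m) (h (φ w)))
    (hb : ∀ w : ℂ, ‖w‖ < 1 → HasSum (fun n => b n * w ^ n) (h w))
    (hc : ∀ n (w : ℂ), ‖w‖ < 1 → HasSum (fun m => c n m * w ^ m) (φ w ^ n))
    (hφ : ∀ w : ℂ, ‖w‖ < 1 → ‖φ w‖ ≤ ‖w‖) (hφc : ContinuousOn φ (ball 0 1)) (N : ℕ) (z : ℂ) :
    HasSum (fun n => b n * ∑ m ∈ range (N + 1), c n m * z ^ m)
      (∑ m ∈ range (N + 1), a m * z ^ m) := by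
  have hw (t : ℝ) : ‖circleMap 0 (1 / 2) t‖ < 1 := by
    rw [norm_circleMap_zero]; norm_num [abs_of_pos]
  have hφw : Continuous fun t => φ (circleMap 0 (1 / 2) t) :=
    hφc.comp_continuous (continuous_circleMap 0 _) fun t => mem_ball_zero_iff.mpr (hw t)
  have hK := continuous_rogosinskiKernel (2 * z) N
  -- The kernel at `2 z` on the circle of radius `1 / 2` reads off the sections at `z`.
  have hswap := intervalIntegral.hasSum_integral_of_norm_le_mul (a := 0) (b := 2 * π)
    (F := fun n t => b n * (φ (circleMap 0 (1 / 2) t) ^ n * rogosinskiKernel (2 * z) N t))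
    (f := fun t => h (φ (circleMap 0 (1 / 2) t)) * rogosinskiKernel (2 * z) N t)
    (c := fun n => ‖b n‖ * (1 / 2) ^ n)
    (fun n => continuous_const.mul ((hφw.pow n).mul (continuous_ofReal.comp hK)))
    (continuous_abs.comp hK) (summable_norm_mul_pow_of_hasSum_ball hb (by norm_num) (by norm_num))
    (fun n t => ?_) (fun t => by
      simpa only [mul_assoc] using (hb _ ((hφ _ (hw t)).trans_lt (hw t))).mul_right
        (rogosinskiKernel (2 * z) N t : ℂ))
  · have h2z : ((1 / 2 : ℝ) : ℂ) * (2 * z) = z := by push_cast; ring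
    simp_rw [intervalIntegral.integral_const_mul,
      integral_mul_rogosinskiKernel_of_hasSum (hc _) (by norm_num) (by norm_num : (1 / 2 : ℝ) < 1),
      integral_mul_rogosinskiKernel_of_hasSum ha (by norm_num) (by norm_num : (1 / 2 : ℝ) < 1),
      h2z, mul_left_comm (b _)] at hswap
    exact (hasSum_mul_left_iff (by simp [Real.pi_ne_zero])).mp hswap
  · rw [norm_mul, norm_mul, norm_pow, norm_real, Real.norm_eq_abs, mul_assoc]
    gcongr
    · simpa using hφ _ (hw t)
    · rfl

theorem exists_eq_mul_of_map_zero_of_norm_le_one {φ : ℂ → ℂ} (hφ0 : φ 0 = 0)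
    (hφ1 : ∀ w : ℂ, ‖w‖ < 1 → ‖φ w‖ ≤ 1) (hφd : DifferentiableOn ℂ φ (ball 0 1)) :
    ∃ ψ : ℂ → ℂ, DifferentiableOn ℂ ψ (ball 0 1) ∧ (∀ w : ℂ, ‖w‖ < 1 → ‖ψ w‖ ≤ 1) ∧
      ∀ w, φ w = w * ψ w := by
  have hmaps : MapsTo φ (ball 0 1) (closedBall (φ 0) 1) := fun w hw => by
    simpa [hφ0] using hφ1 w (mem_ball_zero_iff.mp hw)
  refine ⟨dslope φ 0, (differentiableOn_dslope (ball_mem_nhds 0 one_pos)).mpr hφd,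
    fun w hw => ?_, fun w => ?_⟩
  · simpa using Complex.norm_dslope_le_div_of_mapsTo_ball hφd hmaps (mem_ball_zero_iff.mpr hw)
  · simpa [hφ0] using (sub_smul_dslope φ 0 w).symm

theorem exists_hasSum_mul_pow_of_differentiableOn {g : ℂ → ℂ}
    (hg : DifferentiableOn ℂ g (ball 0 1)) :
    ∃ d : ℕ → ℂ, ∀ w : ℂ, ‖w‖ < 1 → HasSum (fun m => d m * w ^ m) (g w) :=
  ⟨fun m => (m.factorial : ℂ)⁻¹ * iteratedDeriv m g 0, fun w hw => by
    simpa only [sub_zero, smul_eq_mul, mul_left_comm, mul_comm] using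
      Complex.hasSum_taylorSeries_on_ball hg (mem_ball_zero_iff.mpr hw)⟩

theorem hasSum_ite_mul_pow {d : ℕ → ℂ} {w s : ℂ} (h : HasSum (fun j => d j * w ^ j) s) (n : ℕ) :
    HasSum (fun m => (if n ≤ m then d (m - n) else 0) * w ^ m) (w ^ n * s) := by
  have hlow : ∑ m ∈ range n, (if n ≤ m then d (m - n) else 0) * w ^ m = 0 :=
    sum_eq_zero fun m hm => by simp [(Finset.mem_range.mp hm).not_ge]
  rw [← hasSum_nat_add_iff' n, hlow, sub_zero]
  simpa [pow_add, mul_left_comm, mul_comm] using h.mul_left (w ^ n)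

theorem sum_range_ite_mul_pow (d : ℕ → ℂ) (n N : ℕ) (z : ℂ) :
    ∑ m ∈ range N, (if n ≤ m then d (m - n) else 0) * z ^ m =
      z ^ n * ∑ j ∈ range (N - n), d j * z ^ j := by
  rcases le_or_gt n N with hn | hn
  · obtain ⟨k, rfl⟩ := Nat.exists_eq_add_of_le hn
    rw [sum_range_add, add_tsub_cancel_left, mul_sum,
      sum_eq_zero fun m hm => by simp [(Finset.mem_range.mp hm).not_ge], zero_add]
    simp [pow_add, mul_left_comm]
  · rw [Nat.sub_eq_zero_of_le hn.le, sum_range_zero, mul_zero]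
    exact sum_eq_zero fun m hm => by simp [show ¬n ≤ m by simp at hm; omega]

/-- Rogosinski-type inequality under subordination: if `f ≺ h` then each section
of `f` is dominated by the section majorant of `h` for `|z| ≤ 1/2`. -/
theorem rogosinski_subordination (f h φ : ℂ → ℂ) (a b : ℕ → ℂ)
    (hf : ∀ z : ℂ, ‖z‖ < 1 → HasSum (fun n => a n * z ^ n) (f z))
    (hh : ∀ z : ℂ, ‖z‖ < 1 → HasSum (fun n => b n * z ^ n) (h z))
    (hφ0 : φ 0 = 0)
    (hφb : ∀ z : ℂ, ‖z‖ < 1 → ‖φ z‖ ≤ 1)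
    (hφa : AnalyticOnNhd ℂ φ (Metric.ball (0 : ℂ) 1))
    (hsub : ∀ z : ℂ, ‖z‖ < 1 → f z = h (φ z))
    (k : ℕ) (z : ℂ) (hz : ‖z‖ ≤ 1 / 2) :
    ‖∑ n ∈ Finset.range (k + 1), a n * z ^ n‖ ≤
      ∑ n ∈ Finset.range (k + 1), ‖b n‖ * ‖z‖ ^ n := by
  obtain ⟨ψ, hψd, hψ1, hφψ⟩ :=
    exists_eq_mul_of_map_zero_of_norm_le_one hφ0 hφb hφa.differentiableOn
  choose d hd using fun n => exists_hasSum_mul_pow_of_differentiableOn (hψd.pow n)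
  -- `φ ^ n = w ^ n ψ ^ n` has the coefficients of `ψ ^ n` shifted by `n`.
  have hsum := hasSum_sum_range_of_comp (c := fun n m => if n ≤ m then d n (m - n) else 0)
    (fun w hw => hsub w hw ▸ hf w hw) hh
    (fun n w hw => by
      simpa only [hφψ, mul_pow, Pi.pow_apply] using hasSum_ite_mul_pow (hd n w hw) n)
    (fun w hw => by
      rw [hφψ, norm_mul]
      exact mul_le_of_le_one_right (norm_nonneg w) (hψ1 w hw))
    hφa.continuousOn k z
  simp_rw [sum_range_ite_mul_pow] at hsum
  rw [hsum.unique (hasSum_sum_of_ne_finset_zero (s := range (k + 1)) fun n hn => by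
    simp [Nat.sub_eq_zero_of_le (by simpa using hn : k + 1 ≤ n)])]
  refine (norm_sum_le _ _).trans (sum_le_sum fun n hn => ?_)
  rw [norm_mul, norm_mul, norm_pow, Nat.sub_add_comm (mem_range_succ_iff.mp hn)]
  gcongr
  refine mul_le_of_le_one_right (by positivity) (norm_sum_range_mul_pow_le_of_norm_le (hd n)
    (fun w hw => ?_) hz _)
  simpa using pow_le_one₀ (norm_nonneg _) (hψ1 w hw)
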